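/- Let E be a nontrivial finite-dimensional real inner product space, let u ∈ E be nonzero, let r > 0, and let c ∈ ℝ satisfy |c| < r·‖u‖. Then the closed spherical cap {v ∈ E : ‖v‖ = r and c + ⟪v, u⟫ ≥ 0} is nonempty, compact, and contractible (with the subspace topology). -/

import Mathlib

/-!
Let `p = (r / ‖u‖) • u` be the pole of the cap. Since `|c| < r‖u‖`, the cap contains `p` but not
`-p`, so the segment from any point `v` of the cap to `p` avoids the origin, and projecting it
radially back to the sphere gives a homotopy from the identity to the constant map `p`. It stays in
the cap because moving along the segment towards `p` only decreases the angle to `u`.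
-/

open scoped RealInnerProductSpace
open Metric

section

variable {E : Type*} [NormedAddCommGroup E] [InnerProductSpace ℝ E]

theorem smul_add_smul_ne_zero_of_norm_eq {x y : E} (hxy : ‖x‖ = ‖y‖) (hne : x ≠ -y)
    {t : ℝ} (ht : t ∈ unitInterval) : (1 - t) • x + t • y ≠ 0 := by
  intro h0
  have hseg : (0 : E) ∈ segment ℝ x y := by
    rw [← h0]; exact ⟨1 - t, t, by linarith [ht.2], ht.1, by ring, rfl⟩
  rw [mem_segment_iff_sameRay, zero_sub, sub_zero] at hseg
  exact hne (neg_eq_iff_eq_neg.mp (hseg.eq_of_norm_eq (by rwa [norm_neg])))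

theorem real_inner_mul_norm_smul_add_smul_le {x y : E} (hxy : ‖x‖ = ‖y‖)
    {t : ℝ} (ht : t ∈ unitInterval) :
    ⟪x, y⟫ * ‖(1 - t) • x + t • y‖ ≤ ‖x‖ * ⟪(1 - t) • x + t • y, y⟫ := by
  obtain ⟨ht0, ht1⟩ := ht
  set w := (1 - t) • x + t • y
  set r := ‖x‖
  set a := ⟪x, y⟫
  have hr : 0 ≤ r := norm_nonneg x
  have ha : |a| ≤ r ^ 2 := by
    simpa [a, r, ← hxy, sq] using abs_real_inner_le_norm x y
  have hwy : ⟪w, y⟫ = (1 - t) * a + t * r ^ 2 := by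
    simp only [w, inner_add_left, real_inner_smul_left, real_inner_self_eq_norm_sq, ← hxy, a, r]
  have hw_sq : ‖w‖ ^ 2 = (1 - t) ^ 2 * r ^ 2 + 2 * t * (1 - t) * a + t ^ 2 * r ^ 2 := by
    simp only [w, norm_add_sq_real, norm_smul, real_inner_smul_left, real_inner_smul_right,
      Real.norm_eq_abs, abs_of_nonneg ht0, abs_of_nonneg (sub_nonneg.2 ht1), ← hxy, a, r]
    ring
  have hw_le : ‖w‖ ≤ r := by
    calc ‖w‖ ≤ ‖(1 - t) • x‖ + ‖t • y‖ := norm_add_le _ _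
    _ = r := by
      rw [norm_smul, norm_smul, Real.norm_of_nonneg ht0, Real.norm_of_nonneg (sub_nonneg.2 ht1),
        ← hxy]
      ring
  rw [hwy]
  clear_value w r a
  obtain ⟨ha₁, ha₂⟩ := abs_le.mp ha
  rcases le_or_gt 0 a with ha0 | ha0
  · nlinarith [mul_le_mul_of_nonneg_left hw_le ha0,
      mul_nonneg (mul_nonneg ht0 hr) (sub_nonneg.2 ha₂)]
  rcases le_or_gt 0 ((1 - t) * a + t * r ^ 2) with hX | hX
  · nlinarith [norm_nonneg w]
  -- both sides are negative, so it suffices to compare their squares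
  have hsq : a ^ 2 * ‖w‖ ^ 2 - r ^ 2 * ((1 - t) * a + t * r ^ 2) ^ 2 =
      t * (r ^ 4 - a ^ 2) * -(2 * (1 - t) * a + t * r ^ 2) := by
    rw [hw_sq]; ring
  have hr4 : 0 ≤ r ^ 4 - a ^ 2 := by nlinarith
  have hsq_le : (r * ((1 - t) * a + t * r ^ 2)) ^ 2 ≤ (a * ‖w‖) ^ 2 := by
    nlinarith [mul_nonneg (mul_nonneg ht0 hr4)
      (by nlinarith : 0 ≤ -(2 * (1 - t) * a + t * r ^ 2))]
  nlinarith [mul_nonpos_of_nonpos_of_nonneg ha0.le (norm_nonneg w),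
    mul_nonpos_of_nonneg_of_nonpos hr hX.le]

theorem contractibleSpace_of_radial_segment_mem {S : Set E} {r : ℝ} {p : E}
    (hS : S ⊆ sphere 0 r) (hp : p ∈ S) (hnp : -p ∉ S)
    (hmem : ∀ v ∈ S, ∀ t ∈ unitInterval,
      (r / ‖(1 - t) • v + t • p‖) • ((1 - t) • v + t • p) ∈ S) :
    ContractibleSpace S := by
  have hnorm : ∀ v ∈ S, ‖v‖ = r := fun v hv => mem_sphere_zero_iff_norm.mp (hS hv)
  have hr : r ≠ 0 := by
    rintro rfl
    have hp0 : p = 0 := norm_eq_zero.mp (hnorm p hp)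
    exact hnp (by simpa [hp0] using hp)
  have hne : ∀ v ∈ S, ∀ t ∈ unitInterval, (1 - t) • v + t • p ≠ 0 := fun v hv t ht =>
    smul_add_smul_ne_zero_of_norm_eq ((hnorm v hv).trans (hnorm p hp).symm)
      (fun h => hnp (h ▸ hv)) ht
  have hw : Continuous fun q : unitInterval × S =>
      (1 - (q.1 : ℝ)) • (q.2 : E) + (q.1 : ℝ) • p := by
    fun_prop
  refine (contractible_iff_id_nullhomotopic S).2 ⟨⟨p, hp⟩, ⟨⟨⟨fun q =>
    ⟨_, hmem q.2 q.2.2 q.1 q.1.2⟩, ?_⟩, fun v => ?_, fun v => ?_⟩⟩⟩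
  · exact ((continuous_const.div hw.norm fun q => norm_ne_zero_iff.2 (hne _ q.2.2 _ q.1.2)).smul
      hw).subtype_mk _
  · simp [hnorm v v.2, div_self hr]
  · simp [hnorm p hp, div_self hr]

def sphericalCap (u : E) (r c : ℝ) : Set E := {v | ‖v‖ = r ∧ 0 ≤ c + ⟪v, u⟫}

variable {u : E} {r c : ℝ}

theorem sphericalCap_subset_sphere : sphericalCap u r c ⊆ sphere 0 r :=
  fun _ hv => mem_sphere_zero_iff_norm.2 hv.1

theorem isClosed_sphericalCap : IsClosed (sphericalCap u r c) :=
  (isClosed_eq (by fun_prop) (by fun_prop)).inter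
    (isClosed_le (f := fun _ => 0) (g := fun v => c + ⟪v, u⟫) (by fun_prop) (by fun_prop))

theorem isCompact_sphericalCap [FiniteDimensional ℝ E] : IsCompact (sphericalCap u r c) :=
  (isCompact_sphere 0 r).of_isClosed_subset isClosed_sphericalCap sphericalCap_subset_sphere

theorem norm_div_norm_smul_self (hu : u ≠ 0) (hr : 0 ≤ r) : ‖(r / ‖u‖) • u‖ = r := by
  rw [norm_smul, Real.norm_eq_abs, abs_div, abs_norm, abs_of_nonneg hr,
    div_mul_cancel₀ _ (norm_ne_zero_iff.2 hu)]

theorem real_inner_div_norm_smul_self (hu : u ≠ 0) : ⟪(r / ‖u‖) • u, u⟫ = r * ‖u‖ := by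
  rw [real_inner_smul_left, real_inner_self_eq_norm_mul_norm]
  field_simp

theorem div_norm_smul_mem_sphericalCap (hu : u ≠ 0) (hr : 0 ≤ r) (hc : -c ≤ r * ‖u‖) :
    (r / ‖u‖) • u ∈ sphericalCap u r c :=
  ⟨norm_div_norm_smul_self hu hr, by rw [real_inner_div_norm_smul_self hu]; linarith⟩

theorem neg_div_norm_smul_not_mem_sphericalCap (hu : u ≠ 0) (hc : c < r * ‖u‖) :
    -((r / ‖u‖) • u) ∉ sphericalCap u r c := fun h => by
  have := h.2
  rw [inner_neg_left, real_inner_div_norm_smul_self hu] at this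
  linarith

theorem sphericalCap_radial_segment_mem (hu : u ≠ 0) (hr : 0 < r) (hc : c < r * ‖u‖)
    {v : E} (hv : v ∈ sphericalCap u r c) {t : ℝ} (ht : t ∈ unitInterval) :
    (r / ‖(1 - t) • v + t • (r / ‖u‖) • u‖) • ((1 - t) • v + t • (r / ‖u‖) • u) ∈
      sphericalCap u r c := by
  set p := (r / ‖u‖) • u
  set w := (1 - t) • v + t • p
  have hvp : ‖v‖ = ‖p‖ := hv.1.trans (norm_div_norm_smul_self hu hr.le).symm
  have hw : 0 < ‖w‖ := norm_pos_iff.2 <| smul_add_smul_ne_zero_of_norm_eq hvp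
    (fun h => neg_div_norm_smul_not_mem_sphericalCap hu hc (h ▸ hv)) ht
  have hkey : ⟪v, u⟫ * ‖w‖ ≤ r * ⟪w, u⟫ := by
    have := real_inner_mul_norm_smul_add_smul_le hvp ht
    rw [real_inner_smul_right, real_inner_smul_right, hv.1, mul_assoc, mul_left_comm r] at this
    exact le_of_mul_le_mul_left this (div_pos hr (norm_pos_iff.2 hu))
  refine ⟨by rw [norm_smul, Real.norm_of_nonneg (div_nonneg hr.le hw.le),
    div_mul_cancel₀ _ hw.ne'], ?_⟩
  have : ⟪v, u⟫ ≤ r / ‖w‖ * ⟪w, u⟫ := by rwa [div_mul_eq_mul_div, le_div_iff₀ hw]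
  rw [real_inner_smul_left]
  linarith [hv.2]

end

theorem spherical_cap_compact_contractible_general (E : Type*) [NormedAddCommGroup E]
    [InnerProductSpace ℝ E] [FiniteDimensional ℝ E]
    (u : E) (hu : u ≠ 0) (r : ℝ) (hr : 0 < r) (c : ℝ) (hc : |c| < r * ‖u‖) :
    ({v : E | ‖v‖ = r ∧ 0 ≤ c + ⟪v, u⟫}).Nonempty ∧
    IsCompact {v : E | ‖v‖ = r ∧ 0 ≤ c + ⟪v, u⟫} ∧
    ContractibleSpace {v : E | ‖v‖ = r ∧ 0 ≤ c + ⟪v, u⟫} := by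
  have hc' : c < r * ‖u‖ := lt_of_abs_lt hc
  have hp := div_norm_smul_mem_sphericalCap hu hr.le ((neg_le_abs c).trans hc.le)
  exact ⟨⟨_, hp⟩, isCompact_sphericalCap,
    contractibleSpace_of_radial_segment_mem sphericalCap_subset_sphere hp
      (neg_div_norm_smul_not_mem_sphericalCap hu hc')
      fun _ hv _ ht => sphericalCap_radial_segment_mem hu hr hc' hv ht⟩

/-- Let `E` be a nontrivial finite-dimensional real inner product space, `u ∈ E` nonzero,
`r > 0`, and `c ∈ ℝ` with `|c| < r·‖u‖`. Then the closed spherical cap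
`{v : ‖v‖ = r ∧ c + ⟪v, u⟫ ≥ 0}` is nonempty, compact, and contractible. -/
theorem spherical_cap_compact_contractible (E : Type*) [NormedAddCommGroup E]
    [InnerProductSpace ℝ E] [FiniteDimensional ℝ E] [Nontrivial E]
    (u : E) (hu : u ≠ 0) (r : ℝ) (hr : 0 < r) (c : ℝ) (hc : |c| < r * ‖u‖) :
    ({v : E | ‖v‖ = r ∧ 0 ≤ c + ⟪v, u⟫}).Nonempty ∧
    IsCompact {v : E | ‖v‖ = r ∧ 0 ≤ c + ⟪v, u⟫} ∧
    ContractibleSpace {v : E | ‖v‖ = r ∧ 0 ≤ c + ⟪v, u⟫} :=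
  spherical_cap_compact_contractible_general E u hu r hr c hc
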